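/- String chopping for two strings: for any two disjoint strings S = S(x,e) and S' = S(x',e'), there exists s₀ > 0 such that, with S¹ = {x + t·e : 0 ≤ t ≤ s₀} and S² = {x + t·e : t ≥ s₀}, each of the pairs (S¹, S') and (S², S') is comparable (i.e., S¹ ≻ S' or S' ≻ S¹, and S² ≻ S' or S' ≻ S²). -/

import Mathlib

noncomputable section

abbrev M4 : Type := Fin 4 → ℝ

/-- Minkowski inner product with signature (+,-,-,-). -/
def mdot (x y : M4) : ℝ := x 0 * y 0 - x 1 * y 1 - x 2 * y 2 - x 3 * y 3

/-- `later x y`: x is not in the closed backward light cone of y. -/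
def later (x y : M4) : Prop := ¬ (mdot (x - y) (x - y) ≥ 0 ∧ x 0 - y 0 ≤ 0)

/-- Pointwise posteriority for sets. -/
def setLater (R S : Set M4) : Prop := ∀ x ∈ R, ∀ y ∈ S, later x y

/-- The string with apex x and direction e. -/
def mstring (x e : M4) : Set M4 := {z | ∃ s : ℝ, 0 ≤ s ∧ z = x + s • e}

/-!
Parametrise the first string by `t ↦ x + t • e`, `t ≥ 0`, and let `A` (resp. `B`) be the set of
parameters whose point lies in the causal past `S' - J⁺` (resp. the causal future `S' + J⁺`) of the
second string, `J⁺` being the closed future light cone. Since `J⁺` is a closed convex cone, `A` and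
`B` are intervals. They are closed because a point of the spacelike ray `S'` that is causally
related to `z` has a parameter bounded by a continuous function of `z`. They are disjoint: `J⁺` is
pointed and `S'` is acausal, so a point both in the causal past and in the causal future of `S'`
lies on `S'`, which the first string misses. Two disjoint closed intervals of `[0, ∞)` are
separated by some `s₀ > 0`, and `s₀` chops the first string as required.
-/

open Set Filter Topology
open scoped Pointwise

def futureCone : Set M4 := {v | 0 ≤ mdot v v ∧ 0 ≤ v 0}

lemma mdot_add_self (u v : M4) :
    mdot (u + v) (u + v) = mdot u u + 2 * mdot u v + mdot v v := by
  simp only [mdot, Pi.add_apply]; ring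

lemma mdot_smul_self (c : ℝ) (v : M4) : mdot (c • v) (c • v) = c ^ 2 * mdot v v := by
  simp only [mdot, Pi.smul_apply, smul_eq_mul]; ring

lemma mdot_neg_self (v : M4) : mdot (-v) (-v) = mdot v v := by
  simpa using mdot_smul_self (-1) v

lemma continuous_mdot_self : Continuous fun v : M4 => mdot v v := by
  unfold mdot; fun_prop

/-- Reverse Cauchy–Schwarz: `|u⃗ · v⃗| ≤ |u⃗| |v⃗| ≤ u₀ v₀` for the spatial parts. -/
lemma mdot_nonneg_of_mem_futureCone {u v : M4} (hu : u ∈ futureCone) (hv : v ∈ futureCone) :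
    0 ≤ mdot u v := by
  obtain ⟨hu, hu0⟩ := hu
  obtain ⟨hv, hv0⟩ := hv
  simp only [mdot] at *
  have spatial : (u 1 * v 1 + u 2 * v 2 + u 3 * v 3) ^ 2 ≤ (u 0 * v 0) ^ 2 := by
    nlinarith [sq_nonneg (u 1 * v 2 - u 2 * v 1), sq_nonneg (u 1 * v 3 - u 3 * v 1),
      sq_nonneg (u 2 * v 3 - u 3 * v 2),
      mul_le_mul (by linarith : u 1 * u 1 + u 2 * u 2 + u 3 * u 3 ≤ u 0 * u 0)
        (by linarith : v 1 * v 1 + v 2 * v 2 + v 3 * v 3 ≤ v 0 * v 0)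
        (add_nonneg (add_nonneg (mul_self_nonneg _) (mul_self_nonneg _)) (mul_self_nonneg _))
        (mul_self_nonneg (u 0))]
  linarith [(abs_le_of_sq_le_sq' spatial (mul_nonneg hu0 hv0)).2]

lemma add_mem_futureCone {u v : M4} (hu : u ∈ futureCone) (hv : v ∈ futureCone) :
    u + v ∈ futureCone := by
  refine ⟨?_, add_nonneg hu.2 hv.2⟩
  rw [mdot_add_self]
  linarith [hu.1, hv.1, mdot_nonneg_of_mem_futureCone hu hv]

lemma smul_mem_futureCone {c : ℝ} (hc : 0 ≤ c) {v : M4} (hv : v ∈ futureCone) :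
    c • v ∈ futureCone := by
  refine ⟨?_, ?_⟩
  · rw [mdot_smul_self]; exact mul_nonneg (sq_nonneg c) hv.1
  · simpa using mul_nonneg hc hv.2

lemma convex_futureCone : Convex ℝ futureCone := fun _ hu _ hv _ _ ha hb _ =>
  add_mem_futureCone (smul_mem_futureCone ha hu) (smul_mem_futureCone hb hv)

lemma eq_zero_of_mem_futureCone_of_neg_mem {v : M4} (hv : v ∈ futureCone)
    (hnv : -v ∈ futureCone) : v = 0 := by
  have h0 : v 0 = 0 := le_antisymm (by simpa using hnv.2) hv.2
  have hv := hv.1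
  simp only [mdot, h0] at hv
  ext i
  fin_cases i <;> simp only [Fin.zero_eta, Fin.mk_one, Fin.reduceFinMk, Pi.zero_apply] <;>
    nlinarith [sq_nonneg (v 1), sq_nonneg (v 2), sq_nonneg (v 3)]

lemma isClosed_futureCone : IsClosed futureCone :=
  (isClosed_le continuous_const continuous_mdot_self).inter
    (isClosed_le continuous_const (continuous_apply 0))

lemma later_iff (z y : M4) : later z y ↔ y - z ∉ futureCone := by
  have : mdot (z - y) (z - y) = mdot (y - z) (y - z) := by rw [← neg_sub, mdot_neg_self]
  simp [later, futureCone, this]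

lemma mem_sub_futureCone_iff {S : Set M4} {z : M4} :
    z ∈ S - futureCone ↔ ∃ y ∈ S, y - z ∈ futureCone :=
  ⟨fun ⟨y, hy, v, hv, hz⟩ => ⟨y, hy, by rwa [← hz, sub_sub_cancel]⟩,
    fun ⟨y, hy, h⟩ => ⟨y, hy, y - z, h, sub_sub_cancel y z⟩⟩

lemma mem_add_futureCone_iff {S : Set M4} {z : M4} :
    z ∈ S + futureCone ↔ ∃ y ∈ S, z - y ∈ futureCone :=
  ⟨fun ⟨y, hy, v, hv, hz⟩ => ⟨y, hy, by rwa [← hz, add_sub_cancel_left]⟩,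
    fun ⟨y, hy, h⟩ => ⟨y, hy, z - y, h, add_sub_cancel y z⟩⟩

lemma setLater_iff_disjoint_sub_futureCone {R S : Set M4} :
    setLater R S ↔ Disjoint R (S - futureCone) := by
  simp [setLater, later_iff, Set.disjoint_left, mem_sub_futureCone_iff]

lemma setLater_iff_disjoint_add_futureCone {R S : Set M4} :
    setLater S R ↔ Disjoint R (S + futureCone) := by
  simp only [setLater, later_iff, Set.disjoint_left, mem_add_futureCone_iff, not_exists, not_and]
  exact ⟨fun h z hz y hy => h y hy z hz, fun h y hy z hz => h hz y hy⟩

def IsAcausal (S : Set M4) : Prop := ∀ y₁ ∈ S, ∀ y₂ ∈ S, y₁ - y₂ ∈ futureCone → y₁ = y₂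

lemma IsAcausal.sub_futureCone_inter_add_futureCone_subset {S : Set M4} (hS : IsAcausal S) :
    (S - futureCone) ∩ (S + futureCone) ⊆ S := by
  rintro z ⟨hpast, hfuture⟩
  obtain ⟨y₁, hy₁, h₁⟩ := mem_sub_futureCone_iff.1 hpast
  obtain ⟨y₂, hy₂, h₂⟩ := mem_add_futureCone_iff.1 hfuture
  obtain rfl : y₁ = y₂ := hS y₁ hy₁ y₂ hy₂ (by simpa using add_mem_futureCone h₁ h₂)
  have : y₁ - z = 0 := eq_zero_of_mem_futureCone_of_neg_mem h₁ (by rwa [neg_sub])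
  rwa [← sub_eq_zero.1 this]

lemma convex_mstring (x e : M4) : Convex ℝ (mstring x e) := by
  rintro _ ⟨s₁, hs₁, rfl⟩ _ ⟨s₂, hs₂, rfl⟩ a b ha hb hab
  refine ⟨a * s₁ + b * s₂, by positivity, ?_⟩
  linear_combination (norm := module) hab • x

lemma isAcausal_mstring (x e : M4) (he : mdot e e < 0) : IsAcausal (mstring x e) := by
  rintro _ ⟨s₁, -, rfl⟩ _ ⟨s₂, -, rfl⟩ h
  have hsub : x + s₁ • e - (x + s₂ • e) = (s₁ - s₂) • e := by module
  have hcausal := h.1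
  rw [hsub, mdot_smul_self] at hcausal
  have : (s₁ - s₂) ^ 2 = 0 := le_antisymm (nonpos_of_mul_nonneg_left hcausal he) (sq_nonneg _)
  rw [sub_eq_zero.1 ((pow_eq_zero_iff two_ne_zero).1 this)]

lemma abs_le_of_mdot_sub_smul_self_nonneg {w v : M4} (hv : mdot v v = -1) {s : ℝ}
    (h : 0 ≤ mdot (w - s • v) (w - s • v)) :
    |s| ≤ |mdot w v| + √(mdot w w + mdot w v ^ 2) := by
  have expand : mdot (w - s • v) (w - s • v) = mdot w w - 2 * s * mdot w v - s ^ 2 := by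
    simp only [mdot, Pi.sub_apply, Pi.smul_apply, smul_eq_mul] at hv ⊢
    linear_combination s ^ 2 * hv
  have hsq : |s + mdot w v| ≤ √(mdot w w + mdot w v ^ 2) := Real.abs_le_sqrt (by nlinarith)
  calc |s| = |(s + mdot w v) - mdot w v| := by ring_nf
    _ ≤ |s + mdot w v| + |mdot w v| := abs_sub _ _
    _ ≤ _ := by linarith

lemma isClosed_image_fst_of_abs_le {X : Type*} [TopologicalSpace X] [SequentialSpace X]
    {C : Set (X × ℝ)} (hC : IsClosed C) {Φ : X → ℝ} (hΦ : Continuous Φ)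
    (hbound : ∀ p ∈ C, |p.2| ≤ Φ p.1) : IsClosed (Prod.fst '' C) := by
  refine IsSeqClosed.isClosed fun z z₀ hz hlim => ?_
  choose p hpC hp using hz
  obtain ⟨R, hR⟩ := ((hΦ.tendsto z₀).comp hlim).bddAbove_range
  have hball : ∀ n, (p n).2 ∈ Metric.closedBall 0 R := fun n => by
    have := hbound _ (hpC n)
    rw [hp n] at this
    simpa using this.trans (hR ⟨n, rfl⟩)
  obtain ⟨s, -, φ, hφ, hs⟩ := (isCompact_closedBall (0 : ℝ) R).tendsto_subseq hball
  have hpφ : Tendsto (p ∘ φ) atTop (𝓝 (z₀, s)) := by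
    have : p ∘ φ = fun n => (z (φ n), (p (φ n)).2) := funext fun n => Prod.ext (hp _) rfl
    exact this ▸ (hlim.comp hφ.tendsto_atTop).prodMk_nhds hs
  exact ⟨(z₀, s), hC.mem_of_tendsto hpφ (Eventually.of_forall fun n => hpC (φ n)), rfl⟩

lemma isClosed_mstring_add {K : Set M4} (hK : IsClosed K) (hK_causal : ∀ v ∈ K, 0 ≤ mdot v v)
    {x e : M4} (he : mdot e e = -1) : IsClosed (mstring x e + K) := by
  have : mstring x e + K = Prod.fst '' {p : M4 × ℝ | 0 ≤ p.2 ∧ p.1 - (x + p.2 • e) ∈ K} := by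
    ext z
    constructor
    · rintro ⟨_, ⟨s, hs, rfl⟩, v, hv, rfl⟩
      exact ⟨(x + s • e + v, s), ⟨hs, by simpa using hv⟩, rfl⟩
    · rintro ⟨⟨z, s⟩, ⟨hs, hv⟩, rfl⟩
      exact ⟨x + s • e, ⟨s, hs, rfl⟩, _, hv, add_sub_cancel _ _⟩
  rw [this]
  refine isClosed_image_fst_of_abs_le
    ((isClosed_le continuous_const continuous_snd).inter (hK.preimage (by fun_prop)))
    (Φ := fun z => |mdot (z - x) e| + √(mdot (z - x) (z - x) + mdot (z - x) e ^ 2))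
    (by unfold mdot; fun_prop) ?_
  rintro ⟨z, s⟩ ⟨-, hv⟩
  refine abs_le_of_mdot_sub_smul_self_nonneg he ?_
  simpa only [sub_sub] using hK_causal _ hv

lemma isClosed_mstring_add_futureCone {x e : M4} (he : mdot e e = -1) :
    IsClosed (mstring x e + futureCone) :=
  isClosed_mstring_add isClosed_futureCone (fun _ hv => hv.1) he

lemma isClosed_mstring_sub_futureCone {x e : M4} (he : mdot e e = -1) :
    IsClosed (mstring x e - futureCone) := by
  rw [sub_eq_add_neg]
  exact isClosed_mstring_add isClosed_futureCone.neg (fun v hv => mdot_neg_self v ▸ hv.1) he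

lemma Convex.preimage_add_smul {E : Type*} [AddCommGroup E] [Module ℝ E] {K : Set E}
    (hK : Convex ℝ K) (x e : E) : Convex ℝ ((fun t : ℝ => x + t • e) ⁻¹' K) := by
  intro t₁ h₁ t₂ h₂ a b ha hb hab
  have hcombo : x + (a • t₁ + b • t₂) • e = a • (x + t₁ • e) + b • (x + t₂ • e) := by
    linear_combination (norm := module) -(hab • x)
  show x + (a • t₁ + b • t₂) • e ∈ K
  rw [hcombo]
  exact hK h₁ h₂ ha hb hab

lemma Set.OrdConnected.forall_lt_of_disjoint {α : Type*} [LinearOrder α] {A B : Set α}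
    (hA : A.OrdConnected) (hB : B.OrdConnected) (hAB : Disjoint A B) {a₀ b₀ : α}
    (ha₀ : a₀ ∈ A) (hb₀ : b₀ ∈ B) (h : a₀ < b₀) : ∀ a ∈ A, ∀ b ∈ B, a < b := by
  intro a ha b hb
  by_contra! hba
  rcases le_or_gt b₀ a with h₁ | h₁
  · exact disjoint_left.1 hAB (hA.out ha₀ ha ⟨h.le, h₁⟩) hb₀
  · exact disjoint_left.1 hAB ha (hB.out hb hb₀ ⟨hba, h₁.le⟩)

lemma IsClosed.exists_between_of_forall_lt {α : Type*} [ConditionallyCompleteLinearOrder α]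
    [TopologicalSpace α] [OrderTopology α] [DenselyOrdered α] {A B : Set α}
    (hA : IsClosed A) (hB : IsClosed B) (hAne : A.Nonempty) (hBne : B.Nonempty)
    (hlt : ∀ a ∈ A, ∀ b ∈ B, a < b) : ∃ c, (∀ a ∈ A, a < c) ∧ ∀ b ∈ B, c < b := by
  obtain ⟨a₀, ha₀⟩ := hAne
  obtain ⟨b₀, hb₀⟩ := hBne
  have hAbdd : BddAbove A := ⟨b₀, fun a ha => (hlt a ha b₀ hb₀).le⟩
  have hBbdd : BddBelow B := ⟨a₀, fun b hb => (hlt a₀ ha₀ b hb).le⟩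
  obtain ⟨c, hAc, hcB⟩ :=
    exists_between (hlt _ (hA.csSup_mem ⟨a₀, ha₀⟩ hAbdd) _ (hB.csInf_mem ⟨b₀, hb₀⟩ hBbdd))
  exact ⟨c, fun a ha => (le_csSup hAbdd ha).trans_lt hAc,
    fun b hb => hcB.trans_le (csInf_le hBbdd hb)⟩

lemma exists_pos_chop_of_subset_Ici {A B : Set ℝ} (hA : IsClosed A) (hB : IsClosed B)
    (hA' : A.OrdConnected) (hB' : B.OrdConnected) (hA₀ : A ⊆ Ici 0) (hB₀ : B ⊆ Ici 0)
    (hAB : Disjoint A B) :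
    ∃ s₀ > 0, (Disjoint (Icc 0 s₀) A ∨ Disjoint (Icc 0 s₀) B) ∧
      (Disjoint (Ici s₀) A ∨ Disjoint (Ici s₀) B) := by
  rcases A.eq_empty_or_nonempty with rfl | ⟨a₀, ha₀⟩
  · exact ⟨1, one_pos, .inl (disjoint_empty _), .inl (disjoint_empty _)⟩
  rcases B.eq_empty_or_nonempty with rfl | ⟨b₀, hb₀⟩
  · exact ⟨1, one_pos, .inr (disjoint_empty _), .inr (disjoint_empty _)⟩
  have chop {P Q : Set ℝ} (hP : IsClosed P) (hQ : IsClosed Q) (hP₀ : P ⊆ Ici 0) {p₀ q₀ : ℝ}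
      (hp₀ : p₀ ∈ P) (hq₀ : q₀ ∈ Q) (hlt : ∀ p ∈ P, ∀ q ∈ Q, p < q) :
      ∃ s₀ > 0, Disjoint (Icc 0 s₀) Q ∧ Disjoint (Ici s₀) P := by
    obtain ⟨c, hPc, hcQ⟩ := hP.exists_between_of_forall_lt hQ ⟨p₀, hp₀⟩ ⟨q₀, hq₀⟩ hlt
    exact ⟨c, (hP₀ hp₀).trans_lt (hPc p₀ hp₀),
      disjoint_left.2 fun t ht htQ => (hcQ t htQ).not_ge ht.2,
      disjoint_left.2 fun t ht htP => (hPc t htP).not_ge ht⟩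
  rcases lt_or_gt_of_ne (fun h : a₀ = b₀ => disjoint_left.1 hAB ha₀ (h ▸ hb₀)) with h | h
  · obtain ⟨s₀, hs₀, hB, hA⟩ :=
      chop hA hB hA₀ ha₀ hb₀ (hA'.forall_lt_of_disjoint hB' hAB ha₀ hb₀ h)
    exact ⟨s₀, hs₀, .inr hB, .inl hA⟩
  · obtain ⟨s₀, hs₀, hA, hB⟩ :=
      chop hB hA hB₀ hb₀ ha₀ (hB'.forall_lt_of_disjoint hA' hAB.symm hb₀ ha₀ h)
    exact ⟨s₀, hs₀, .inl hA, .inr hB⟩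

lemma exists_pos_chop {A B : Set ℝ} (hA : IsClosed A) (hB : IsClosed B)
    (hA' : A.OrdConnected) (hB' : B.OrdConnected) (hAB : Disjoint (A ∩ Ici 0) (B ∩ Ici 0)) :
    ∃ s₀ > 0, (Disjoint (Icc 0 s₀) A ∨ Disjoint (Icc 0 s₀) B) ∧
      (Disjoint (Ici s₀) A ∨ Disjoint (Ici s₀) B) := by
  obtain ⟨s₀, hs₀, hfirst, hsecond⟩ := exists_pos_chop_of_subset_Ici (hA.inter isClosed_Ici)
    (hB.inter isClosed_Ici) (hA'.inter ordConnected_Ici) (hB'.inter ordConnected_Ici)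
    inter_subset_right inter_subset_right hAB
  have drop {I P : Set ℝ} (hI : I ⊆ Ici 0) (h : Disjoint I (P ∩ Ici 0)) : Disjoint I P :=
    disjoint_left.2 fun t ht htP => disjoint_left.1 h ht ⟨htP, hI ht⟩
  have hIci : Ici s₀ ⊆ Ici 0 := Ici_subset_Ici.2 hs₀.le
  exact ⟨s₀, hs₀, hfirst.imp (drop Icc_subset_Ici_self) (drop Icc_subset_Ici_self),
    hsecond.imp (drop hIci) (drop hIci)⟩

theorem string_chopping_two_general (x x' e e' : M4)
    (he' : mdot e' e' = -1)
    (hdisj : mstring x e ∩ mstring x' e' = ∅) :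
    ∃ s₀ : ℝ, 0 < s₀ ∧
      (setLater {z : M4 | ∃ t : ℝ, 0 ≤ t ∧ t ≤ s₀ ∧ z = x + t • e} (mstring x' e') ∨
       setLater (mstring x' e') {z : M4 | ∃ t : ℝ, 0 ≤ t ∧ t ≤ s₀ ∧ z = x + t • e}) ∧
      (setLater {z : M4 | ∃ t : ℝ, s₀ ≤ t ∧ z = x + t • e} (mstring x' e') ∨
       setLater (mstring x' e') {z : M4 | ∃ t : ℝ, s₀ ≤ t ∧ z = x + t • e}) := by
  set line : ℝ → M4 := fun t => x + t • e
  have hline : Continuous line := by fun_prop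
  have hdisjoint : Disjoint (line ⁻¹' (mstring x' e' - futureCone) ∩ Ici 0)
      (line ⁻¹' (mstring x' e' + futureCone) ∩ Ici 0) :=
    disjoint_left.2 fun t ⟨hpast, ht⟩ ⟨hfuture, _⟩ =>
      eq_empty_iff_forall_notMem.1 hdisj (line t) ⟨⟨t, ht, rfl⟩,
        (isAcausal_mstring x' e' (by linarith)).sub_futureCone_inter_add_futureCone_subset
          ⟨hpast, hfuture⟩⟩
  obtain ⟨s₀, hs₀, hfirst, hsecond⟩ := exists_pos_chop
    ((isClosed_mstring_sub_futureCone he').preimage hline)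
    ((isClosed_mstring_add_futureCone he').preimage hline)
    (((convex_mstring x' e').sub convex_futureCone).preimage_add_smul x e).ordConnected
    (((convex_mstring x' e').add convex_futureCone).preimage_add_smul x e).ordConnected hdisjoint
  have toPast {I : Set ℝ} (h : Disjoint I (line ⁻¹' (mstring x' e' - futureCone))) :
      setLater (line '' I) (mstring x' e') :=
    setLater_iff_disjoint_sub_futureCone.2 (disjoint_image_left.2 h)
  have toFuture {I : Set ℝ} (h : Disjoint I (line ⁻¹' (mstring x' e' + futureCone))) :
      setLater (mstring x' e') (line '' I) :=
    setLater_iff_disjoint_add_futureCone.2 (disjoint_image_left.2 h)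
  have hseg : {z : M4 | ∃ t : ℝ, 0 ≤ t ∧ t ≤ s₀ ∧ z = x + t • e} = line '' Icc 0 s₀ := by
    ext; simp [line, eq_comm, and_assoc]
  have hray : {z : M4 | ∃ t : ℝ, s₀ ≤ t ∧ z = x + t • e} = line '' Ici s₀ := by
    ext; simp [line, eq_comm]
  refine ⟨s₀, ?_⟩
  rw [hseg, hray]
  exact ⟨hs₀, hfirst.imp toPast toFuture, hsecond.imp toPast toFuture⟩

/-- String chopping for two disjoint strings. -/
theorem string_chopping_two (x x' e e' : M4)
    (he : mdot e e = -1) (he' : mdot e' e' = -1)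
    (hdisj : mstring x e ∩ mstring x' e' = ∅) :
    ∃ s₀ : ℝ, 0 < s₀ ∧
      (setLater {z : M4 | ∃ t : ℝ, 0 ≤ t ∧ t ≤ s₀ ∧ z = x + t • e} (mstring x' e') ∨
       setLater (mstring x' e') {z : M4 | ∃ t : ℝ, 0 ≤ t ∧ t ≤ s₀ ∧ z = x + t • e}) ∧
      (setLater {z : M4 | ∃ t : ℝ, s₀ ≤ t ∧ z = x + t • e} (mstring x' e') ∨
       setLater (mstring x' e') {z : M4 | ∃ t : ℝ, s₀ ≤ t ∧ z = x + t • e}) :=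
  string_chopping_two_general x x' e e' he' hdisj
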